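/- For every integer $k \ge 1$ and all $n \ge 1$, $g_k(n) \le (n^k - n)/(k^k - k)$ when $k \ge 2$. -/

import Mathlib

/-- `p n k` : maximum of `∏ q i` over partitions of `n` into `k` nonnegative
parts each strictly less than `n` (so `p 0 0 = 1`). -/
noncomputable def p (n k : ℕ) : ℕ :=
  sSup {m | ∃ q : Fin k → ℕ, (∑ i, q i) = n ∧ (∀ i, q i < n) ∧ m = ∏ i, q i}

/-- The Erdős–Hajnal function `g k s`: `g k s = 0` for `s < k` and otherwise the
maximum of `∑ i, g k (s i) + ∏ i, s i` over nontrivial partitions of `s` into `k` parts. -/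
noncomputable def g (k : ℕ) (s : ℕ) : ℕ :=
  Nat.strongRecOn s fun s ih =>
    if s < k then 0
    else sSup {m | ∃ q : Fin k → ℕ, ∃ h : ∀ i, q i < s,
      (∑ i, q i) = s ∧ m = (∑ i, ih (q i) (h i)) + ∏ i, q i}

lemma g_eq (k s : ℕ) : g k s =
    if s < k then 0
    else sSup {m | ∃ q : Fin k → ℕ, ∃ h : ∀ i, q i < s,
      (∑ i, q i) = s ∧ m = (∑ i, g k (q i)) + ∏ i, q i} := by
  unfold g
  rw [Nat.strongRecOn_eq]

lemma amgm_shift (k : ℕ) (hk : 1 ≤ k) (x : Fin k → ℝ) (hx : ∀ i, 0 ≤ x i)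
    (f : Fin k → Fin k) :
    (k : ℝ) * ∏ i, x i ≤ ∑ t : Fin k, ∏ j, x (f j + t) := by
  haveI : NeZero k := ⟨by omega⟩
  have hP : (0:ℝ) ≤ ∏ i, x i := Finset.prod_nonneg fun i _ => hx i
  have hz : ∀ t : Fin k, (0:ℝ) ≤ ∏ j, x (f j + t) :=
    fun t => Finset.prod_nonneg fun j _ => hx _
  have hprod : ∏ t : Fin k, ∏ j, x (f j + t) = (∏ i, x i) ^ k := by
    rw [Finset.prod_comm]
    have h1 : ∀ j : Fin k, ∏ t : Fin k, x (f j + t) = ∏ i, x i := by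
      intro j
      exact Fintype.prod_equiv (Equiv.addLeft (f j)) _ _ (fun t => rfl)
    calc ∏ j : Fin k, ∏ t : Fin k, x (f j + t) = ∏ j : Fin k, ∏ i, x i := by
            exact Finset.prod_congr rfl fun j _ => h1 j
      _ = (∏ i, x i) ^ k := by
            rw [Finset.prod_const, Finset.card_univ, Fintype.card_fin]
  have hk0 : (k:ℝ) ≠ 0 := Nat.cast_ne_zero.2 (by omega)
  have amgm := Real.geom_mean_le_arith_mean_weighted Finset.univ
    (fun _ => (k:ℝ)⁻¹) (fun t => ∏ j, x (f j + t))
    (fun i _ => by positivity) (by simp [Finset.card_univ, hk0]) (fun t _ => hz t)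
  rw [Real.finset_prod_rpow _ _ (fun t _ => hz t)] at amgm
  rw [hprod] at amgm
  rw [← Real.rpow_natCast (∏ i, x i) k, ← Real.rpow_mul hP,
    mul_inv_cancel₀ hk0, Real.rpow_one] at amgm
  rw [← Finset.mul_sum] at amgm
  calc (k:ℝ) * ∏ i, x i ≤ (k:ℝ) * ((k:ℝ)⁻¹ * ∑ t : Fin k, ∏ j, x (f j + t)) := by
        apply mul_le_mul_of_nonneg_left amgm (by positivity)
    _ = ∑ t : Fin k, ∏ j, x (f j + t) := by field_simp

lemma key_ineq (k : ℕ) (hk : 1 ≤ k) (x : Fin k → ℝ) (hx : ∀ i, 0 ≤ x i) :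
    ∑ i, x i ^ k + ((k:ℝ)^k - k) * ∏ i, x i ≤ (∑ i, x i) ^ k := by
  haveI : NeZero k := ⟨by omega⟩
  classical
  -- expand the power
  have expand : (∑ i, x i) ^ k = ∑ f : Fin k → Fin k, ∏ j, x (f j) := by
    rw [Finset.sum_pow' Finset.univ x k, Fintype.piFinset_univ]
  set C : Finset (Fin k → Fin k) :=
    Finset.univ.filter (fun f => ∃ c, f = fun _ => c) with hC
  set NC : Finset (Fin k → Fin k) :=
    Finset.univ.filter (fun f => ¬ ∃ c, f = fun _ => c) with hNC
  have hsplit : ∑ f : Fin k → Fin k, ∏ j, x (f j) =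
      (∑ f ∈ C, ∏ j, x (f j)) + ∑ f ∈ NC, ∏ j, x (f j) :=
    (Finset.sum_filter_add_sum_filter_not _ _ _).symm
  have hCim : C = Finset.image (fun c : Fin k => (fun _ : Fin k => c)) Finset.univ := by
    ext f
    constructor
    · intro hf
      rw [hC] at hf
      simp only [Finset.mem_filter, Finset.mem_univ, true_and] at hf
      obtain ⟨c, rfl⟩ := hf
      exact Finset.mem_image_of_mem _ (Finset.mem_univ c)
    · intro hf
      simp only [Finset.mem_image, Finset.mem_univ, true_and] at hf
      obtain ⟨c, rfl⟩ := hf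
      rw [hC]
      simp only [Finset.mem_filter, Finset.mem_univ, true_and]
      exact ⟨c, rfl⟩
  have hinj : Function.Injective (fun c : Fin k => (fun _ : Fin k => c)) := by
    intro a b hab
    exact congrFun hab ⟨0, by omega⟩
  have hconst : ∑ f ∈ C, ∏ j, x (f j) = ∑ c, x c ^ k := by
    rw [hCim, Finset.sum_image (fun a _ b _ h => hinj h)]
    refine Finset.sum_congr rfl fun c _ => ?_
    rw [Finset.prod_const, Finset.card_univ, Fintype.card_fin]
  have hcardNC : NC.card = k ^ k - k := by
    have h1 : C.card + NC.card = k ^ k := by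
      rw [hC, hNC, Finset.card_filter_add_card_filter_not, Finset.card_univ,
        Fintype.card_fun, Fintype.card_fin]
    have h2 : C.card = k := by
      rw [hCim, Finset.card_image_of_injective _ hinj, Finset.card_univ, Fintype.card_fin]
    omega
  -- shift invariance of NC sums
  have hshift : ∀ t : Fin k, ∑ f ∈ NC, ∏ j, x (f j + t) = ∑ f ∈ NC, ∏ j, x (f j) := by
    intro t
    apply Finset.sum_nbij' (i := fun f => fun j => f j + t) (j := fun f => fun j => f j - t)
    · intro f hf
      simp only [hNC, Finset.mem_filter, Finset.mem_univ, true_and] at hf ⊢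
      rintro ⟨c, hc⟩
      refine hf ⟨c - t, ?_⟩
      funext j
      have h := congrFun hc j
      exact eq_sub_iff_add_eq.2 h
    · intro f hf
      simp only [hNC, Finset.mem_filter, Finset.mem_univ, true_and] at hf ⊢
      rintro ⟨c, hc⟩
      refine hf ⟨c + t, ?_⟩
      funext j
      have h := congrFun hc j
      exact sub_eq_iff_eq_add.1 h
    · intro f _; funext j; simp
    · intro f _; funext j; simp
    · intro f _; rfl
  -- the nonconstant part dominates (k^k - k) * ∏ x
  have hNCbound : ((k:ℝ)^k - k) * ∏ i, x i ≤ ∑ f ∈ NC, ∏ j, x (f j) := by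
    have h1 : ∑ f ∈ NC, ∑ t : Fin k, ∏ j, x (f j + t)
        = (k:ℝ) * ∑ f ∈ NC, ∏ j, x (f j) := by
      rw [Finset.sum_comm]
      calc ∑ t : Fin k, ∑ f ∈ NC, ∏ j, x (f j + t)
          = ∑ _t : Fin k, ∑ f ∈ NC, ∏ j, x (f j) :=
            Finset.sum_congr rfl fun t _ => hshift t
        _ = (k:ℝ) * ∑ f ∈ NC, ∏ j, x (f j) := by
            rw [Finset.sum_const, Finset.card_univ, Fintype.card_fin, nsmul_eq_mul]
    have h2 : NC.card • ((k:ℝ) * ∏ i, x i) ≤ ∑ f ∈ NC, ∑ t : Fin k, ∏ j, x (f j + t) := by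
      rw [← Finset.sum_const]
      exact Finset.sum_le_sum fun f _ => amgm_shift k hk x hx f
    rw [h1, nsmul_eq_mul, hcardNC] at h2
    have hcast : ((k ^ k - k : ℕ) : ℝ) = (k:ℝ)^k - k := by
      have : k ≤ k ^ k := Nat.le_self_pow (by omega) k
      push_cast [Nat.cast_sub this]
      ring
    rw [hcast] at h2
    have hkpos : (0:ℝ) < k := by exact_mod_cast (by omega : 0 < k)
    apply le_of_mul_le_mul_left _ hkpos
    calc (k:ℝ) * (((k:ℝ)^k - k) * ∏ i, x i) = ((k:ℝ)^k - k) * ((k:ℝ) * ∏ i, x i) := by ring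
      _ ≤ (k:ℝ) * ∑ f ∈ NC, ∏ j, x (f j) := h2
  rw [expand, hsplit, hconst]
  exact add_le_add_right hNCbound _

lemma g_zero_of_lt {k s : ℕ} (h : s < k) : g k s = 0 := by rw [g_eq, if_pos h]

lemma g_main (k : ℕ) (hk : 2 ≤ k) : ∀ n, 1 ≤ n →
    (g k n : ℝ) ≤ ((n : ℝ) ^ k - n) / ((k : ℝ) ^ k - k) := by
  have hkk : k < k ^ k := Nat.lt_pow_self (by omega : 1 < k)
  have hD : (0:ℝ) < (k:ℝ)^k - k := by
    have h : ((k:ℕ):ℝ) < ((k^k:ℕ):ℝ) := by exact_mod_cast hkk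
    push_cast at h; linarith
  have hD' : ((k:ℝ)^k - k) ≠ 0 := ne_of_gt hD
  have hrhs0 : ∀ m : ℕ, 1 ≤ m → (0:ℝ) ≤ ((m:ℝ)^k - m) / ((k:ℝ)^k - k) := by
    intro m hm
    apply div_nonneg _ (le_of_lt hD)
    have : m ≤ m ^ k := Nat.le_self_pow (by omega) m
    have : ((m:ℕ):ℝ) ≤ ((m^k:ℕ):ℝ) := by exact_mod_cast this
    push_cast at this; linarith
  intro n
  induction n using Nat.strong_induction_on with
  | _ n ih =>
    intro hn
    by_cases hnk : n < k
    · rw [g_zero_of_lt hnk]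
      simpa using hrhs0 n hn
    · push_neg at hnk
      rw [g_eq, if_neg (not_lt.2 hnk)]
      set S : Set ℕ := {m | ∃ q : Fin k → ℕ, ∃ h : ∀ i, q i < n,
        (∑ i, q i) = n ∧ m = (∑ i, g k (q i)) + ∏ i, q i} with hS
      have hbdd : BddAbove S := by
        refine ⟨k * ((Finset.range n).sup (g k)) + n ^ k, ?_⟩
        rintro m ⟨q, hlt, hsum, rfl⟩
        have h1 : ∑ i, g k (q i) ≤ k * (Finset.range n).sup (g k) := by
          calc ∑ i, g k (q i) ≤ ∑ _i : Fin k, (Finset.range n).sup (g k) :=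
              Finset.sum_le_sum fun i _ => Finset.le_sup (Finset.mem_range.2 (hlt i))
            _ = k * (Finset.range n).sup (g k) := by
              rw [Finset.sum_const, Finset.card_univ, Fintype.card_fin, smul_eq_mul]
        have h2 : ∏ i, q i ≤ n ^ k := by
          calc ∏ i, q i ≤ ∏ _i : Fin k, n :=
              Finset.prod_le_prod' fun i _ => le_of_lt (hlt i)
            _ = n ^ k := by rw [Finset.prod_const, Finset.card_univ, Fintype.card_fin]
        omega
      by_cases hne : S.Nonempty
      · obtain ⟨q, hlt, hsum, hmeq⟩ := Nat.sSup_mem hne hbdd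
        rw [hmeq]
        push_cast
        have hterm : ∀ i, (g k (q i) : ℝ) ≤ ((q i:ℝ)^k - q i) / ((k:ℝ)^k - k) := by
          intro i
          rcases Nat.eq_zero_or_pos (q i) with h0 | h1
          · rw [h0, g_zero_of_lt (by omega)]
            simp [zero_pow (by omega : k ≠ 0)]
          · exact ih (q i) (hlt i) h1
        have hsum' : (∑ i, (q i:ℝ)) = n := by exact_mod_cast hsum
        have hkey := key_ineq k (by omega) (fun i => (q i : ℝ)) (fun i => by positivity)
        simp only [hsum'] at hkey
        have hmid : ∑ i, ((q i:ℝ)^k - q i) / ((k:ℝ)^k - k)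
            = ((∑ i, (q i:ℝ)^k) - n) / ((k:ℝ)^k - k) := by
          rw [← Finset.sum_div, Finset.sum_sub_distrib, hsum']
        calc (∑ i, (g k (q i):ℝ)) + ∏ i, (q i : ℝ)
            ≤ (∑ i, ((q i:ℝ)^k - q i) / ((k:ℝ)^k - k)) + ∏ i, (q i:ℝ) :=
              add_le_add_left (Finset.sum_le_sum fun i _ => hterm i) _
          _ = ((∑ i, (q i:ℝ)^k) - n + ((k:ℝ)^k - k) * ∏ i, (q i:ℝ)) / ((k:ℝ)^k - k) := by
              rw [hmid]
              field_simp
          _ ≤ ((n:ℝ)^k - n) / ((k:ℝ)^k - k) := by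
              rw [div_le_div_iff_of_pos_right hD]
              linarith [hkey]
      · rw [Set.not_nonempty_iff_eq_empty] at hne
        rw [hne, csSup_empty]
        simpa using hrhs0 n hn

theorem g_upper_bound (k n : ℕ) (hk : 2 ≤ k) (hn : 1 ≤ n) :
    (g k n : ℝ) ≤ ((n : ℝ) ^ k - n) / ((k : ℝ) ^ k - k) := g_main k hk n hn
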